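/- arXiv:1812.08485 — 2 statements merged into one kernel-verified Lean document; each statement's English description precedes it below -/
import Mathlib

section
/- Let f : ℝⁿ → ℝ be convex and differentiable, with componentwise Lipschitz constants L₁,…,Lₙ > 0, i.e. |∇ᵢf(x) − ∇ᵢf(x + h eᵢ)| ≤ Lᵢ|h| for all x ∈ ℝⁿ, h ∈ ℝ, i. Assume the minimizer set Ω is nonempty with f* = min f, and fix L̄ᵢ ≥ Lᵢ. Let p₁,…,pₙ be a probability distribution with pᵢ ≥ p_min > 0 for all i, let the indices i₀, i₁, … be drawn i.i.d. from this distribution, and define the coordinate descent iterates x_{k+1} = x_k − (∇_{i_k} f(x_k)/L̄_{i_k}) e_{i_k} from any x₀. Then k·(E[f(x_k)] − f*) → 0 as k → ∞, where E denotes expectation over the random indices i₀,…,i_{k−1}; that is, E[f(x_k)] − f* = o(1/k). -/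
/-!
A coordinate step along `eᵢ` of length `∇ᵢf(x)/L̄ᵢ` lowers `f` by at least `∇ᵢf(x)²/(2L̄ᵢ)`
(one-dimensional descent lemma), so in expectation `f(xₖ)` drops by at least
`(p_min/2)·G(xₖ)`, where `G(x) = ∑ᵢ ∇ᵢf(x)²/L̄ᵢ`. Against the weighted distance
`V(x) = ∑ᵢ (L̄ᵢ/pᵢ)(xᵢ − x*ᵢ)²` the expected step is exactly
`V − 2⟪∇f(x), x − x*⟫ + G`, and convexity bounds the inner product below by `f(x) − f*`.
Hence `E V(xₖ)/2 + (E f(xₖ) − f*)/p_min` decreases by at least `E f(xₖ) − f*` per step,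
so the gaps are summable; being nonincreasing, they are then `o(1/k)`.
-/

open Filter Topology Finset

/-- The random trajectory of a coordinate-type method: `traj step x0 k ι` is the
`k`-th iterate obtained from `x0` when the coordinates chosen at iterations
`0, …, k−1` are `ι 0, …, ι (k−1)`. -/
def traj {E : Type*} {n : ℕ} (step : E → Fin n → E) (x0 : E) :
    ∀ k : ℕ, (Fin k → Fin n) → E
  | 0, _ => x0
  | k + 1, ι => step (traj step x0 k fun t => ι t.castSucc) (ι (Fin.last k))

/-- `E[φ(xₖ)]` when the indices are drawn i.i.d. with law `p`. -/
def trajExpect {α : Type*} {n : ℕ} (p : Fin n → ℝ) (step : α → Fin n → α) (x0 : α) (k : ℕ)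
    (φ : α → ℝ) : ℝ :=
  ∑ ι : Fin k → Fin n, (∏ t, p (ι t)) * φ (traj step x0 k ι)

section trajExpect

variable {α : Type*} {n : ℕ} {p : Fin n → ℝ} {step : α → Fin n → α} {x0 : α} {k : ℕ}
  {φ ψ : α → ℝ}

theorem trajExpect_succ : trajExpect p step x0 (k + 1) φ =
    trajExpect p step x0 k fun x => ∑ i, p i * φ (step x i) := by
  rw [trajExpect, ← (Fin.snocEquiv fun _ => Fin n).sum_comp, Fintype.sum_prod_type, sum_comm]
  refine sum_congr rfl fun ι _ => ?_
  rw [mul_sum]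
  refine sum_congr rfl fun i _ => ?_
  simp only [Fin.snocEquiv_apply, Fin.prod_univ_castSucc, Fin.snoc_castSucc, Fin.snoc_last,
    traj]
  ring

theorem trajExpect_mono (hp : ∀ i, 0 ≤ p i) (h : ∀ x, φ x ≤ ψ x) :
    trajExpect p step x0 k φ ≤ trajExpect p step x0 k ψ :=
  sum_le_sum fun _ _ => mul_le_mul_of_nonneg_left (h _) (prod_nonneg fun _ _ => hp _)

theorem trajExpect_const (hpsum : ∑ i, p i = 1) (c : ℝ) :
    trajExpect p step x0 k (fun _ => c) = c := by
  rw [trajExpect, ← sum_mul, ← Fintype.sum_pow, hpsum, one_pow, one_mul]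

theorem trajExpect_nonneg (hp : ∀ i, 0 ≤ p i) (h : ∀ x, 0 ≤ φ x) :
    0 ≤ trajExpect p step x0 k φ :=
  sum_nonneg fun _ _ => mul_nonneg (prod_nonneg fun _ _ => hp _) (h _)

theorem trajExpect_succ_le (hp : ∀ i, 0 ≤ p i) (h : ∀ x, ∑ i, p i * φ (step x i) ≤ ψ x) :
    trajExpect p step x0 (k + 1) φ ≤ trajExpect p step x0 k ψ :=
  trajExpect_succ.trans_le (trajExpect_mono hp h)

theorem trajExpect_add : trajExpect p step x0 k (fun x => φ x + ψ x) =
    trajExpect p step x0 k φ + trajExpect p step x0 k ψ := by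
  simp only [trajExpect, mul_add, sum_add_distrib]

theorem trajExpect_sub : trajExpect p step x0 k (fun x => φ x - ψ x) =
    trajExpect p step x0 k φ - trajExpect p step x0 k ψ := by
  simp only [trajExpect, mul_sub, sum_sub_distrib]

theorem trajExpect_const_mul (c : ℝ) : trajExpect p step x0 k (fun x => c * φ x) =
    c * trajExpect p step x0 k φ := by
  simp only [trajExpect, mul_sum, mul_left_comm c]

end trajExpect

theorem Antitone.tendsto_nat_mul_of_summable {a : ℕ → ℝ} (ha : Antitone a) (h0 : ∀ k, 0 ≤ a k)
    (hsum : Summable a) : Tendsto (fun k : ℕ => (k : ℝ) * a k) atTop (𝓝 0) := by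
  have htail : Tendsto (fun k : ℕ => 2 * ∑' j, a (j + k / 2)) atTop (𝓝 0) := by
    simpa using ((tendsto_sum_nat_add a).comp (Nat.tendsto_div_const_atTop two_ne_zero)).const_mul 2
  refine squeeze_zero (fun k => mul_nonneg k.cast_nonneg (h0 k)) (fun k => ?_) htail
  have hblock : ((k - k / 2 : ℕ) : ℝ) * a k ≤ ∑ j ∈ range (k - k / 2), a (j + k / 2) := by
    simpa using card_nsmul_le_sum (range (k - k / 2)) (fun j => a (j + k / 2)) (a k)
      fun j hj => ha (by simp at hj; omega)
  have hk : (k : ℝ) ≤ 2 * ((k - k / 2 : ℕ) : ℝ) := by exact_mod_cast (by omega)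
  calc (k : ℝ) * a k ≤ 2 * (((k - k / 2 : ℕ) : ℝ) * a k) := by
        nlinarith [h0 k]
    _ ≤ 2 * ∑' j, a (j + k / 2) := by
        gcongr
        exact hblock.trans <| ((summable_nat_add_iff (k / 2)).2 hsum).sum_le_tsum _
          fun j _ => h0 _

theorem summable_of_le_sub_succ {F W : ℕ → ℝ} (hF : ∀ k, 0 ≤ F k) (hW : ∀ k, 0 ≤ W k)
    (hdec : ∀ k, F k ≤ W k - W (k + 1)) : Summable F :=
  summable_of_sum_range_le hF fun m =>
    calc ∑ k ∈ range m, F k ≤ ∑ k ∈ range m, (W k - W (k + 1)) := sum_le_sum fun k _ => hdec k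
      _ = W 0 - W m := sum_range_sub' W m
      _ ≤ W 0 := sub_le_self _ (hW m)

theorem tendsto_nat_mul_of_descent_of_lyapunov {F G H : ℕ → ℝ} {c : ℝ} (hc : 0 < c)
    (hF : ∀ k, 0 ≤ F k) (hG : ∀ k, 0 ≤ G k) (hH : ∀ k, 0 ≤ H k)
    (hdesc : ∀ k, F (k + 1) ≤ F k - c * G k) (hlyap : ∀ k, H (k + 1) ≤ H k - 2 * F k + G k) :
    Tendsto (fun k : ℕ => (k : ℝ) * F k) atTop (𝓝 0) := by
  refine (antitone_nat_of_succ_le fun k => ?_).tendsto_nat_mul_of_summable hF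
    (summable_of_le_sub_succ hF (W := fun k => H k / 2 + F k / (2 * c))
      (fun k => by have := hF k; have := hH k; positivity) fun k => ?_)
  · nlinarith [hdesc k, hG k]
  · have hG_le : G k / 2 ≤ F k / (2 * c) - F (k + 1) / (2 * c) := by
      rw [← sub_div, le_div_iff₀ (by positivity)]
      linarith [hdesc k]
    linarith [hlyap k]

theorem le_add_mul_add_sq_of_abs_deriv_sub_le {φ φ' : ℝ → ℝ} {L : ℝ}
    (hφ : ∀ t, HasDerivAt φ (φ' t) t) (hφ' : ∀ t, |φ' t - φ' 0| ≤ L * |t|) (h : ℝ) :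
    φ h ≤ φ 0 + φ' 0 * h + L * h ^ 2 / 2 := by
  set ψ : ℝ → ℝ := fun s => φ (s * h) - (φ' 0 * (s * h) + L * h ^ 2 * s ^ 2 / 2)
  have hψ : ∀ s, HasDerivAt ψ (φ' (s * h) * h - (φ' 0 * h + L * h ^ 2 * s)) s := by
    intro s
    have hlin : HasDerivAt (fun s : ℝ => s * h) h s := by simpa using (hasDerivAt_id s).mul_const h
    refine (((hφ (s * h)).comp s hlin).sub
      ((hlin.const_mul (φ' 0)).add (((hasDerivAt_pow 2 s).const_mul (L * h ^ 2)).div_const 2)))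
      |>.congr_deriv ?_
    push_cast
    ring
  have hψ' : ∀ s ∈ Set.Icc (0 : ℝ) 1, φ' (s * h) * h - (φ' 0 * h + L * h ^ 2 * s) ≤ 0 := by
    rintro s ⟨hs, -⟩
    have := hφ' (s * h)
    calc φ' (s * h) * h - (φ' 0 * h + L * h ^ 2 * s)
        = (φ' (s * h) - φ' 0) * h - L * h ^ 2 * s := by ring
      _ ≤ |φ' (s * h) - φ' 0| * |h| - L * h ^ 2 * s := by
        rw [← abs_mul]
        linarith [le_abs_self ((φ' (s * h) - φ' 0) * h)]
      _ ≤ L * |s * h| * |h| - L * h ^ 2 * s := by gcongr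
      _ = 0 := by
        rw [abs_mul, abs_of_nonneg hs, mul_assoc, mul_assoc, abs_mul_abs_self]
        ring
  have hanti : AntitoneOn ψ (Set.Icc 0 1) :=
    antitoneOn_of_hasDerivWithinAt_nonpos (convex_Icc 0 1)
      (fun s _ => (hψ s).continuousAt.continuousWithinAt) (fun s _ => (hψ s).hasDerivWithinAt)
      fun s hs => hψ' s (interior_subset hs)
  have := hanti (by simp) (by simp) zero_le_one
  simp only [ψ, one_mul, zero_mul, one_pow, mul_one, mul_zero] at this
  linarith

theorem ConvexOn.add_fderiv_sub_le {F : Type*} [NormedAddCommGroup F] [NormedSpace ℝ F]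
    {f : F → ℝ} {f' : F →L[ℝ] ℝ} {x : F} (hf : ConvexOn ℝ Set.univ f) (hx : HasFDerivAt f f' x)
    (y : F) : f x + f' (y - x) ≤ f y := by
  have hline : ConvexOn ℝ Set.univ (f ∘ AffineMap.lineMap (k := ℝ) x y) := by
    simpa using hf.comp_affineMap (AffineMap.lineMap x y)
  have hx' : HasFDerivAt f f' (AffineMap.lineMap (k := ℝ) x y 0) := by
    rwa [AffineMap.lineMap_apply_zero]
  have hderiv : HasDerivAt (f ∘ AffineMap.lineMap (k := ℝ) x y) (f' (y - x)) 0 :=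
    hx'.comp_hasDerivAt 0 AffineMap.hasDerivAt_lineMap
  have := hline.le_slope_of_hasDerivAt (Set.mem_univ 0) (Set.mem_univ 1) one_pos hderiv
  simp only [slope_def_field, Function.comp_apply, AffineMap.lineMap_apply_one,
    AffineMap.lineMap_apply_zero, sub_zero, div_one] at this
  linarith

section EuclideanSpace

variable {n : ℕ} {f : EuclideanSpace ℝ (Fin n) → ℝ}
  {f' : EuclideanSpace ℝ (Fin n) → EuclideanSpace ℝ (Fin n)}

theorem apply_add_smul_single_le (hf : ∀ y, HasGradientAt f (f' y) y) {i : Fin n} {L : ℝ}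
    (hL : ∀ y (h : ℝ), |f' (y + h • EuclideanSpace.single i 1) i - f' y i| ≤ L * |h|)
    (x : EuclideanSpace ℝ (Fin n)) (h : ℝ) :
    f (x + h • EuclideanSpace.single i 1) ≤ f x + f' x i * h + L * h ^ 2 / 2 := by
  have hφ : ∀ t : ℝ, HasDerivAt (fun t : ℝ => f (x + t • EuclideanSpace.single i 1))
      (f' (x + t • EuclideanSpace.single i 1) i) t := fun t => by
    simpa [EuclideanSpace.inner_single_right, Function.comp_def] using
      (hf _).hasFDerivAt.comp_hasDerivAt t
        (((hasDerivAt_id t).smul_const (EuclideanSpace.single i (1 : ℝ))).const_add x)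
  simpa using le_add_mul_add_sq_of_abs_deriv_sub_le hφ (fun t => by simpa using hL x t) h

noncomputable def coordStep (f' : EuclideanSpace ℝ (Fin n) → EuclideanSpace ℝ (Fin n))
    (Lbar : Fin n → ℝ) (x : EuclideanSpace ℝ (Fin n)) (i : Fin n) : EuclideanSpace ℝ (Fin n) :=
  x - (f' x i / Lbar i) • EuclideanSpace.single i 1

theorem apply_coordStep_le (hf : ∀ y, HasGradientAt f (f' y) y) {Lbar : Fin n → ℝ} {i : Fin n}
    {L : ℝ} (hL : ∀ y (h : ℝ), |f' (y + h • EuclideanSpace.single i 1) i - f' y i| ≤ L * |h|)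
    (hLbar : L ≤ Lbar i) (hLbar_pos : 0 < Lbar i) (x : EuclideanSpace ℝ (Fin n)) :
    f (coordStep f' Lbar x i) ≤ f x - f' x i ^ 2 / (2 * Lbar i) := by
  rw [coordStep, sub_eq_add_neg, ← neg_smul]
  calc _ ≤ f x + f' x i * -(f' x i / Lbar i) + L * (-(f' x i / Lbar i)) ^ 2 / 2 :=
        apply_add_smul_single_le hf hL x _
    _ ≤ f x + f' x i * -(f' x i / Lbar i) + Lbar i * (-(f' x i / Lbar i)) ^ 2 / 2 := by gcongr
    _ = f x - f' x i ^ 2 / (2 * Lbar i) := by field_simp; ring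

def weightedSqNorm (w : Fin n → ℝ) (v : EuclideanSpace ℝ (Fin n)) : ℝ :=
  ∑ i, w i * v i ^ 2

theorem weightedSqNorm_nonneg {w : Fin n → ℝ} (hw : ∀ i, 0 ≤ w i)
    (v : EuclideanSpace ℝ (Fin n)) : 0 ≤ weightedSqNorm w v :=
  sum_nonneg fun i _ => mul_nonneg (hw i) (sq_nonneg _)

theorem weightedSqNorm_sub_smul_single (w : Fin n → ℝ) (v : EuclideanSpace ℝ (Fin n)) (i : Fin n)
    (a : ℝ) : weightedSqNorm w (v - a • EuclideanSpace.single i 1) =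
      weightedSqNorm w v - w i * (2 * a * v i - a ^ 2) := by
  rw [weightedSqNorm, weightedSqNorm, eq_sub_iff_add_eq, ← sum_erase_add _ _ (mem_univ i),
    ← sum_erase_add _ _ (mem_univ i), add_assoc]
  congr 1
  · refine sum_congr rfl fun j hj => ?_
    simp [ne_of_mem_erase hj]
  · simp only [PiLp.sub_apply, PiLp.smul_apply, PiLp.single_eq_same, smul_eq_mul, mul_one]
    ring

theorem sum_mul_apply_coordStep_le (hf : ∀ y, HasGradientAt f (f' y) y) {L Lbar : Fin n → ℝ}
    (hL : ∀ y i (h : ℝ), |f' (y + h • EuclideanSpace.single i 1) i - f' y i| ≤ L i * |h|)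
    (hLbar : ∀ i, L i ≤ Lbar i) (hLbar_pos : ∀ i, 0 < Lbar i) {p : Fin n → ℝ} {pmin : ℝ}
    (hpmin : 0 ≤ pmin) (hp : ∀ i, pmin ≤ p i) (hpsum : ∑ i, p i = 1)
    (x : EuclideanSpace ℝ (Fin n)) :
    ∑ i, p i * f (coordStep f' Lbar x i) ≤ f x - pmin / 2 * weightedSqNorm Lbar⁻¹ (f' x) := by
  calc ∑ i, p i * f (coordStep f' Lbar x i)
      ≤ ∑ i, (p i * f x - p i * (f' x i ^ 2 / (2 * Lbar i))) := by
        refine sum_le_sum fun i _ => ?_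
        rw [← mul_sub]
        exact mul_le_mul_of_nonneg_left (apply_coordStep_le hf (hL · i) (hLbar i) (hLbar_pos i) x)
          (hpmin.trans (hp i))
    _ ≤ f x - ∑ i, pmin / 2 * (Lbar⁻¹ i * f' x i ^ 2) := by
        rw [sum_sub_distrib, ← sum_mul, hpsum, one_mul]
        refine sub_le_sub_left (sum_le_sum fun i _ => ?_) _
        have := hLbar_pos i
        rw [Pi.inv_apply, show pmin / 2 * ((Lbar i)⁻¹ * f' x i ^ 2) =
          pmin * (f' x i ^ 2 / (2 * Lbar i)) by ring]
        exact mul_le_mul_of_nonneg_right (hp i) (by positivity)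
    _ = f x - pmin / 2 * weightedSqNorm Lbar⁻¹ (f' x) := by rw [weightedSqNorm, mul_sum]

theorem sum_mul_weightedSqNorm_coordStep_sub {Lbar p : Fin n → ℝ} (hLbar : ∀ i, Lbar i ≠ 0)
    (hp : ∀ i, p i ≠ 0) (hpsum : ∑ i, p i = 1) (x xstar : EuclideanSpace ℝ (Fin n)) :
    ∑ i, p i * weightedSqNorm (Lbar / p) (coordStep f' Lbar x i - xstar) =
      weightedSqNorm (Lbar / p) (x - xstar) - 2 * inner ℝ (f' x) (x - xstar) +
        weightedSqNorm Lbar⁻¹ (f' x) := by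
  have hterm : ∀ i, p i * weightedSqNorm (Lbar / p) (coordStep f' Lbar x i - xstar) =
      p i * weightedSqNorm (Lbar / p) (x - xstar) - 2 * ((x - xstar) i * f' x i) +
        Lbar⁻¹ i * f' x i ^ 2 := fun i => by
    have := hLbar i
    have := hp i
    rw [coordStep, sub_right_comm, weightedSqNorm_sub_smul_single, Pi.div_apply, Pi.inv_apply]
    field_simp
    ring
  rw [sum_congr rfl fun i _ => hterm i, sum_add_distrib, sum_sub_distrib, ← sum_mul, hpsum,
    one_mul, ← mul_sum, PiLp.inner_apply]
  simp [weightedSqNorm]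

theorem sum_mul_weightedSqNorm_coordStep_sub_le (hconv : ConvexOn ℝ Set.univ f)
    (hf : ∀ y, HasGradientAt f (f' y) y) {Lbar p : Fin n → ℝ} (hLbar : ∀ i, Lbar i ≠ 0)
    (hp : ∀ i, p i ≠ 0) (hpsum : ∑ i, p i = 1) (x xstar : EuclideanSpace ℝ (Fin n)) :
    ∑ i, p i * weightedSqNorm (Lbar / p) (coordStep f' Lbar x i - xstar) ≤
      weightedSqNorm (Lbar / p) (x - xstar) - 2 * (f x - f xstar) +
        weightedSqNorm Lbar⁻¹ (f' x) := by
  have hsupport := hconv.add_fderiv_sub_le (hf x).hasFDerivAt xstar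
  rw [InnerProductSpace.toDual_apply_apply, ← neg_sub, inner_neg_right] at hsupport
  rw [sum_mul_weightedSqNorm_coordStep_sub hLbar hp hpsum]
  linarith

end EuclideanSpace

/-- **Theorem 3 of the paper.** Stochastic coordinate descent with
i.i.d. coordinate sampling (probabilities `pᵢ ≥ p_min > 0`) satisfies
`E[f(x_k)] − f* = o(1/k)`, where the expectation is over the random indices. -/
theorem coordinate_descent_o_one_div_k
    {n : ℕ}
    (f : EuclideanSpace ℝ (Fin n) → ℝ)
    (f' : EuclideanSpace ℝ (Fin n) → EuclideanSpace ℝ (Fin n))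
    (hconv : ConvexOn ℝ Set.univ f)
    (hderiv : ∀ y, HasGradientAt f (f' y) y)
    (Li : Fin n → ℝ) (hLi : ∀ i, 0 < Li i)
    (hcoordlip : ∀ (y : EuclideanSpace ℝ (Fin n)) (i : Fin n) (h : ℝ),
      |f' (y + h • EuclideanSpace.single i 1) i - f' y i| ≤ Li i * |h|)
    (Lbar : Fin n → ℝ) (hLbar : ∀ i, Li i ≤ Lbar i)
    (xstar : EuclideanSpace ℝ (Fin n)) (hxstar : ∀ y, f xstar ≤ f y)
    (p : Fin n → ℝ) (pmin : ℝ) (hpmin : 0 < pmin)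
    (hp : ∀ i, pmin ≤ p i) (hpsum : ∑ i, p i = 1)
    (x0 : EuclideanSpace ℝ (Fin n)) :
    Filter.Tendsto
      (fun k : ℕ => (k : ℝ) *
        ((∑ ι : Fin k → Fin n, (∏ t, p (ι t)) *
            f (traj (fun z i => z - (f' z i / Lbar i) • EuclideanSpace.single i 1)
                x0 k ι)) - f xstar))
      Filter.atTop (nhds 0) := by
  have hp_pos : ∀ i, 0 < p i := fun i => hpmin.trans_le (hp i)
  have hp_nonneg : ∀ i, 0 ≤ p i := fun i => (hp_pos i).le
  have hLbar_pos : ∀ i, 0 < Lbar i := fun i => (hLi i).trans_le (hLbar i)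
  set E := fun k (φ : EuclideanSpace ℝ (Fin n) → ℝ) => trajExpect p (coordStep f' Lbar) x0 k φ
  set V := fun x => weightedSqNorm (Lbar / p) (x - xstar)
  set S := fun x => weightedSqNorm Lbar⁻¹ (f' x)
  change Tendsto (fun k : ℕ => (k : ℝ) * (E k f - f xstar)) atTop (𝓝 0)
  refine tendsto_nat_mul_of_descent_of_lyapunov (half_pos hpmin) (G := (E · S)) (H := (E · V))
    (fun _ => sub_nonneg.2 <| (trajExpect_const hpsum _).symm.le.trans
      (trajExpect_mono hp_nonneg hxstar))
    (fun _ => trajExpect_nonneg hp_nonneg fun _ =>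
      weightedSqNorm_nonneg (fun i => inv_nonneg.2 (hLbar_pos i).le) _)
    (fun _ => trajExpect_nonneg hp_nonneg fun _ =>
      weightedSqNorm_nonneg (fun i => div_nonneg (hLbar_pos i).le (hp_nonneg i)) _)
    (fun k => ?_) (fun k => ?_)
  · have hdesc := trajExpect_succ_le (step := coordStep f' Lbar) (x0 := x0) (k := k) (φ := f)
      hp_nonneg <| sum_mul_apply_coordStep_le hderiv hcoordlip hLbar hLbar_pos hpmin.le hp hpsum
    simp only [trajExpect_sub, trajExpect_const_mul] at hdesc
    linarith
  · have hlyap := trajExpect_succ_le (step := coordStep f' Lbar) (x0 := x0) (k := k) (φ := V)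
      hp_nonneg fun x => sum_mul_weightedSqNorm_coordStep_sub_le hconv hderiv
        (fun i => (hLbar_pos i).ne') (fun i => (hp_pos i).ne') hpsum x xstar
    simp only [trajExpect_add, trajExpect_sub, trajExpect_const_mul, trajExpect_const hpsum]
      at hlyap
    linarith
end

section
/- Let E be a real inner product space, f : E → ℝ convex and differentiable with L-Lipschitz gradient (L > 0), ψ : E → ℝ convex, F = f + ψ with nonempty minimizer set Ω and F* = min F. Let γ ∈ (0,1], C₂ ∈ (0, (2−γ)/L], C₁ ≥ C₂. Suppose the iterates x_{k+1} = x_k + d_k are generated where d_k is the global minimizer over d of ⟨∇f(x_k), d⟩ + (1/(2α_k))‖d‖² + ψ(x_k + d), with α_k ∈ [C₂, C₁] chosen so that F(x_k + d_k) ≤ F(x_k) − (γ/(2α_k))‖d_k‖². Then k·(F(x_k) − F*) → 0 (i.e., F(x_k) − F* = o(1/k)), and the sequence (x_k) is bounded. -/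
/-!
The quantity `V k = ‖x k - x⋆‖² + (2 L C₁² / γ) (F (x k) - F⋆)` is a Lyapunov function: it
drops by at least `2 C₂ (F (x (k+1)) - F⋆)` at every step. This comes from the three-point
inequality of the proximal step (the model minimized by `d k` is `1/α`-strongly convex, `f` obeys
the descent lemma and the gradient inequality), in which the `‖d k‖²` term is paid for by the
sufficient decrease. Hence `V` is bounded, so are the iterates, and `∑ (F (x k) - F⋆) < ∞`; a
summable nonincreasing nonnegative sequence is `o(1/k)`.
-/

open scoped RealInnerProductSpace
open Filter Topology

theorem Antitone.tendsto_natCast_mul_zero {a : ℕ → ℝ} (ha : Antitone a) (h0 : ∀ n, 0 ≤ a n)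
    (hs : Summable a) : Tendsto (fun n : ℕ => (n : ℝ) * a n) atTop (𝓝 0) := by
  -- `n a n ≤ 2 (n - n/2) a n ≤ 2 ∑_{k ≥ n/2} a k`, a tail of a convergent series.
  have key : ∀ n : ℕ, (n : ℝ) * a n ≤ 2 * ∑' k, a (k + n / 2) := by
    intro n
    have hcard : (n : ℝ) ≤ 2 * ((n - n / 2 : ℕ) : ℝ) := by
      exact_mod_cast (by omega : n ≤ 2 * (n - n / 2))
    have htail : ((n - n / 2 : ℕ) : ℝ) * a n ≤ ∑' k, a (k + n / 2) :=
      calc ((n - n / 2 : ℕ) : ℝ) * a n = ∑ _k ∈ Finset.range (n - n / 2), a n := by simp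
        _ ≤ ∑ k ∈ Finset.range (n - n / 2), a (k + n / 2) :=
          Finset.sum_le_sum fun k hk => ha (by rw [Finset.mem_range] at hk; omega)
        _ ≤ ∑' k, a (k + n / 2) :=
          ((summable_nat_add_iff _).2 hs).sum_le_tsum _ fun k _ => h0 _
    calc (n : ℝ) * a n ≤ 2 * ((n - n / 2 : ℕ) : ℝ) * a n := by gcongr; exact h0 n
      _ ≤ 2 * ∑' k, a (k + n / 2) := by rw [mul_assoc]; gcongr
  refine squeeze_zero (fun n => mul_nonneg n.cast_nonneg (h0 n)) key ?_
  simpa using ((tendsto_sum_nat_add a).comp (Nat.tendsto_div_const_atTop two_ne_zero)).const_mul 2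

theorem summable_of_le_sub_succ_s14 {b V : ℕ → ℝ} (hb : ∀ n, 0 ≤ b n) (hV : ∀ n, 0 ≤ V n)
    (h : ∀ n, b n ≤ V n - V (n + 1)) : Summable b :=
  summable_of_sum_range_le hb fun n =>
    calc ∑ k ∈ Finset.range n, b k ≤ ∑ k ∈ Finset.range n, (V k - V (k + 1)) :=
          Finset.sum_le_sum fun k _ => h k
      _ = V 0 - V n := Finset.sum_range_sub' V n
      _ ≤ V 0 := sub_le_self _ (hV n)

theorem StrongConvexOn.add_mul_sq_le_of_isMinOn {E : Type*} [NormedAddCommGroup E]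
    [NormedSpace ℝ E] {s : Set E} {m : ℝ} {f : E → ℝ} {a b : E} (hf : StrongConvexOn s m f)
    (hmin : IsMinOn f s a) (ha : a ∈ s) (hb : b ∈ s) :
    f a + m / 2 * ‖a - b‖ ^ 2 ≤ f b := by
  set c := m / 2 * ‖a - b‖ ^ 2
  have key : ∀ t ∈ Set.Ioo (0 : ℝ) 1, f a + (1 - t) * c ≤ f b := by
    rintro t ⟨ht0, ht1⟩
    have hconv := hf.2 ha hb (sub_nonneg.2 ht1.le) ht0.le (sub_add_cancel 1 t)
    have hle := isMinOn_iff.1 hmin _ (hf.1 ha hb (sub_nonneg.2 ht1.le) ht0.le (sub_add_cancel 1 t))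
    simp only [smul_eq_mul] at hconv
    refine le_of_mul_le_mul_left ?_ ht0
    linear_combination hconv + hle
  have hlim : Tendsto (fun t : ℝ => f a + (1 - t) * c) (𝓝[>] 0) (𝓝 (f a + (1 - 0) * c)) :=
    (Continuous.tendsto (by fun_prop) 0).mono_left nhdsWithin_le_nhds
  simpa using le_of_tendsto hlim (eventually_of_mem (Ioo_mem_nhdsGT one_pos) key)

section Smooth

variable {E : Type*} [NormedAddCommGroup E] [InnerProductSpace ℝ E] {f : E → ℝ} {f' : E → E}

theorem HasFDerivAt.hasDerivAt_comp_add_smul {g x v : E} {t : ℝ}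
    (hf : HasFDerivAt f (innerSL ℝ g) (x + t • v)) :
    HasDerivAt (fun s : ℝ => f (x + s • v)) ⟪g, v⟫ t := by
  have hline : HasDerivAt (fun s : ℝ => x + s • v) v t := by
    simpa using ((hasDerivAt_id t).smul_const v).const_add x
  simpa [Function.comp_def] using hf.comp_hasDerivAt t hline

theorem ConvexOn.add_inner_sub_le {g x : E} (hconv : ConvexOn ℝ Set.univ f)
    (hf : HasFDerivAt f (innerSL ℝ g) x) (z : E) : f x + ⟪g, z - x⟫ ≤ f z := by
  have hline : ConvexOn ℝ Set.univ fun t : ℝ => f (x + t • (z - x)) := by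
    have h := (hconv.translate_right x).comp_linearMap (LinearMap.toSpanSingleton ℝ E (z - x))
    rwa [Set.preimage_univ, Set.preimage_univ] at h
  have hderiv : HasDerivAt (fun t : ℝ => f (x + t • (z - x))) ⟪g, z - x⟫ 0 :=
    HasFDerivAt.hasDerivAt_comp_add_smul (by simpa using hf)
  have := hline.le_slope_of_hasDerivAt (Set.mem_univ 0) (Set.mem_univ 1) one_pos hderiv
  simp only [slope_def_field, one_smul, add_sub_cancel, zero_smul, add_zero, sub_zero,
    div_one] at this
  linarith

theorem le_add_inner_add_of_lipschitz_gradient {L : ℝ}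
    (hf : ∀ y, HasFDerivAt f (innerSL ℝ (f' y)) y)
    (hlip : ∀ y z, ‖f' y - f' z‖ ≤ L * ‖y - z‖) (x v : E) :
    f (x + v) ≤ f x + ⟪f' x, v⟫ + L / 2 * ‖v‖ ^ 2 := by
  set h : ℝ → ℝ := fun t => f (x + t • v) - t * ⟪f' x, v⟫ - L / 2 * t ^ 2 * ‖v‖ ^ 2
  have hderiv : ∀ t : ℝ, HasDerivAt h (⟪f' (x + t • v), v⟫ - ⟪f' x, v⟫ - L * t * ‖v‖ ^ 2) t := by
    intro t
    have hline := (hf (x + t • v)).hasDerivAt_comp_add_smul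
    have hlin := (hasDerivAt_id' t).mul_const ⟪f' x, v⟫
    have hsq := ((hasDerivAt_pow 2 t).const_mul (L / 2)).mul_const (‖v‖ ^ 2)
    exact ((hline.sub hlin).sub hsq).congr_deriv
      (by simp only [one_mul, Nat.cast_ofNat, Nat.add_one_sub_one, pow_one]; ring)
  have hanti : AntitoneOn h (Set.Ici 0) := by
    refine antitoneOn_of_hasDerivWithinAt_nonpos (convex_Ici 0)
      (fun t _ => (hderiv t).continuousAt.continuousWithinAt)
      (fun t _ => (hderiv t).hasDerivWithinAt) fun t ht => ?_
    rw [interior_Ici, Set.mem_Ioi] at ht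
    have hgrad : ⟪f' (x + t • v) - f' x, v⟫ ≤ L * t * ‖v‖ ^ 2 :=
      calc ⟪f' (x + t • v) - f' x, v⟫ ≤ ‖f' (x + t • v) - f' x‖ * ‖v‖ := real_inner_le_norm _ _
        _ ≤ L * ‖x + t • v - x‖ * ‖v‖ := by gcongr; exact hlip _ _
        _ = L * t * ‖v‖ ^ 2 := by
          rw [add_sub_cancel_left, norm_smul, Real.norm_of_nonneg ht.le]; ring
    rw [inner_sub_left] at hgrad
    linarith
  have := hanti Set.self_mem_Ici (Set.mem_Ici.2 zero_le_one) zero_le_one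
  simp only [h, one_smul, zero_smul, add_zero, one_pow, zero_pow two_ne_zero, one_mul, mul_one,
    zero_mul, mul_zero, sub_zero] at this
  linarith

end Smooth

section ProxGrad

variable {E : Type*} [NormedAddCommGroup E] [InnerProductSpace ℝ E]

noncomputable def proxGradModel (ψ : E → ℝ) (g x : E) (α : ℝ) (d : E) : ℝ :=
  ⟪g, d⟫ + 1 / (2 * α) * ‖d‖ ^ 2 + ψ (x + d)

theorem strongConvexOn_proxGradModel {ψ : E → ℝ} (hψ : ConvexOn ℝ Set.univ ψ) (g x : E) (α : ℝ) :
    StrongConvexOn Set.univ α⁻¹ (proxGradModel ψ g x α) := by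
  rw [strongConvexOn_iff_convex]
  have hconv : ConvexOn ℝ Set.univ fun d => ⟪g, d⟫ + ψ (x + d) :=
    ((innerSL ℝ g).toLinearMap.convexOn convex_univ).add (hψ.translate_right x)
  convert hconv using 2 with d
  simp only [proxGradModel]
  ring

theorem proxGrad_three_point {f ψ : E → ℝ} {f' : E → E} {L α : ℝ} {x d : E}
    (hfconv : ConvexOn ℝ Set.univ f) (hf : ∀ y, HasFDerivAt f (innerSL ℝ (f' y)) y)
    (hlip : ∀ y z, ‖f' y - f' z‖ ≤ L * ‖y - z‖) (hψ : ConvexOn ℝ Set.univ ψ)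
    (hd : IsMinOn (proxGradModel ψ (f' x) x α) Set.univ d) (u : E) :
    f (x + d) + ψ (x + d) ≤
      f u + ψ u + 1 / (2 * α) * (‖x - u‖ ^ 2 - ‖x + d - u‖ ^ 2 - ‖d‖ ^ 2) + L / 2 * ‖d‖ ^ 2 := by
  have hmodel := (strongConvexOn_proxGradModel hψ (f' x) x α).add_mul_sq_le_of_isMinOn hd
    (Set.mem_univ d) (Set.mem_univ (u - x))
  have hdescent := le_add_inner_add_of_lipschitz_gradient hf hlip x d
  have hgrad := hfconv.add_inner_sub_le (hf x) u
  rw [show d - (u - x) = x + d - u by abel] at hmodel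
  simp only [proxGradModel, add_sub_cancel, norm_sub_rev u x,
    show α⁻¹ / 2 = 1 / (2 * α) by ring] at hmodel
  linarith

end ProxGrad

theorem lyapunov_decrease_of_three_point {L γ C₁ C₂ α r r' Δ Δ' s : ℝ} (hL : 0 ≤ L) (hγ : 0 < γ)
    (hC₂ : 0 < C₂) (hα : α ∈ Set.Icc C₂ C₁) (hΔ' : 0 ≤ Δ') (hs : 0 ≤ s)
    (hstep : Δ' ≤ 1 / (2 * α) * (r - r' - s) + L / 2 * s) (hdec : Δ' ≤ Δ - γ / (2 * α) * s) :
    2 * C₂ * Δ' ≤ (r + 2 * L * C₁ ^ 2 / γ * Δ) - (r' + 2 * L * C₁ ^ 2 / γ * Δ') := by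
  obtain ⟨hC₂α, hαC₁⟩ := hα
  have hα0 : 0 < α := hC₂.trans_le hC₂α
  have hstep' : 2 * α * Δ' ≤ r - r' - s + L * α * s := by
    have := mul_le_mul_of_nonneg_left hstep (by positivity : 0 ≤ 2 * α)
    field_simp at this ⊢
    linarith
  have hdec' : γ * s ≤ 2 * α * (Δ - Δ') := by
    have := mul_le_mul_of_nonneg_left hdec (by positivity : 0 ≤ 2 * α)
    field_simp at this
    linarith
  have hgap : 0 ≤ Δ - Δ' :=
    nonneg_of_mul_nonneg_right ((mul_nonneg hγ.le hs).trans hdec') (by positivity)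
  have hsq : α ^ 2 ≤ C₁ ^ 2 := pow_le_pow_left₀ hα0.le hαC₁ 2
  have hsd : L * α * s ≤ 2 * L * C₁ ^ 2 / γ * (Δ - Δ') := by
    rw [div_mul_eq_mul_div, le_div_iff₀ hγ]
    calc L * α * s * γ = L * α * (γ * s) := by ring
      _ ≤ L * α * (2 * α * (Δ - Δ')) := by gcongr
      _ = 2 * L * α ^ 2 * (Δ - Δ') := by ring
      _ ≤ 2 * L * C₁ ^ 2 * (Δ - Δ') := by gcongr
  have hC₂α' : C₂ * Δ' ≤ α * Δ' := mul_le_mul_of_nonneg_right hC₂α hΔ'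
  linarith

theorem proximal_gradient_line_search_o_one_div_k_general
    {E : Type*} [NormedAddCommGroup E] [InnerProductSpace ℝ E]
    (f : E → ℝ) (f' : E → E) (ψ : E → ℝ) (L : ℝ) (hL : 0 < L)
    (hfconv : ConvexOn ℝ Set.univ f)
    (hderiv : ∀ y, HasFDerivAt f (innerSL ℝ (f' y)) y)
    (hlip : ∀ y z, ‖f' y - f' z‖ ≤ L * ‖y - z‖)
    (hψconv : ConvexOn ℝ Set.univ ψ)
    (F : E → ℝ) (hF : ∀ y, F y = f y + ψ y)
    (xstar : E) (hxstar : ∀ y, F xstar ≤ F y)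
    (γ C₁ C₂ : ℝ) (hγ0 : 0 < γ)
    (hC₂0 : 0 < C₂)
    (α : ℕ → ℝ) (hα : ∀ k, α k ∈ Set.Icc C₂ C₁)
    (x : ℕ → E) (d : ℕ → E)
    (hd : ∀ k, ∀ z : E,
      ⟪f' (x k), d k⟫ + 1 / (2 * α k) * ‖d k‖ ^ 2 + ψ (x k + d k) ≤
        ⟪f' (x k), z⟫ + 1 / (2 * α k) * ‖z‖ ^ 2 + ψ (x k + z))
    (hdec : ∀ k, F (x k + d k) ≤ F (x k) - γ / (2 * α k) * ‖d k‖ ^ 2)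
    (hx : ∀ k, x (k + 1) = x k + d k) :
    Filter.Tendsto (fun k : ℕ => (k : ℝ) * (F (x k) - F xstar))
        Filter.atTop (nhds 0) ∧
      Bornology.IsBounded (Set.range x) := by
  set Δ : ℕ → ℝ := fun k => F (x k) - F xstar
  set V : ℕ → ℝ := fun k => ‖x k - xstar‖ ^ 2 + 2 * L * C₁ ^ 2 / γ * Δ k
  have hΔ0 (k : ℕ) : 0 ≤ Δ k := sub_nonneg.2 (hxstar _)
  have hV0 (k : ℕ) : 0 ≤ V k := add_nonneg (sq_nonneg _) (mul_nonneg (by positivity) (hΔ0 k))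
  have hdec' (k : ℕ) : Δ (k + 1) ≤ Δ k - γ / (2 * α k) * ‖d k‖ ^ 2 := by
    simp only [Δ, hx]; linarith [hdec k]
  have hstep (k : ℕ) : 2 * C₂ * Δ (k + 1) ≤ V k - V (k + 1) := by
    refine lyapunov_decrease_of_three_point hL.le hγ0 hC₂0 (hα k) (hΔ0 _) (sq_nonneg _) ?_ (hdec' k)
    have := proxGrad_three_point hfconv hderiv hlip hψconv (isMinOn_univ_iff.2 (hd k)) xstar
    simp only [Δ, hx, hF]
    linarith
  have hΔ_anti : Antitone Δ :=
    antitone_nat_of_succ_le fun k =>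
      (hdec' k).trans (sub_le_self _ (by have := hC₂0.trans_le (hα k).1; positivity))
  have hΔ_summable : Summable Δ := by
    rw [← summable_nat_add_iff 1, ← summable_mul_left_iff (by positivity : 2 * C₂ ≠ 0)]
    exact summable_of_le_sub_succ_s14 (fun k => mul_nonneg (by positivity) (hΔ0 _)) hV0 hstep
  refine ⟨hΔ_anti.tendsto_natCast_mul_zero hΔ0 hΔ_summable, ?_⟩
  have hV_anti : Antitone V :=
    antitone_nat_of_succ_le fun k =>
      sub_nonneg.1 ((mul_nonneg (by positivity) (hΔ0 _)).trans (hstep k))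
  refine (Metric.isBounded_closedBall (x := xstar) (r := √(V 0))).subset ?_
  rintro _ ⟨k, rfl⟩
  rw [Metric.mem_closedBall, dist_eq_norm]
  refine Real.le_sqrt_of_sq_le ((le_add_of_nonneg_right ?_).trans (hV_anti k.zero_le))
  exact mul_nonneg (by positivity) (hΔ0 k)

/-- **Theorem 5 of the paper.** Proximal gradient with line search
(steps `α_k ∈ [C₂, C₁]`, `C₂ ∈ (0, (2−γ)/L]`, sufficient decrease
`F(x_k + d_k) ≤ F(x_k) − (γ/(2α_k))‖d_k‖²`) satisfies `F(x_k) − F* = o(1/k)`, and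
the iterate sequence is bounded. -/
theorem proximal_gradient_line_search_o_one_div_k
    {E : Type*} [NormedAddCommGroup E] [InnerProductSpace ℝ E]
    (f : E → ℝ) (f' : E → E) (ψ : E → ℝ) (L : ℝ) (hL : 0 < L)
    (hfconv : ConvexOn ℝ Set.univ f)
    (hderiv : ∀ y, HasFDerivAt f (innerSL ℝ (f' y)) y)
    (hlip : ∀ y z, ‖f' y - f' z‖ ≤ L * ‖y - z‖)
    (hψconv : ConvexOn ℝ Set.univ ψ)
    (F : E → ℝ) (hF : ∀ y, F y = f y + ψ y)
    (xstar : E) (hxstar : ∀ y, F xstar ≤ F y)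
    (γ C₁ C₂ : ℝ) (hγ0 : 0 < γ) (hγ1 : γ ≤ 1)
    (hC₂0 : 0 < C₂) (hC₂L : C₂ ≤ (2 - γ) / L) (hC₁ : C₂ ≤ C₁)
    (α : ℕ → ℝ) (hα : ∀ k, α k ∈ Set.Icc C₂ C₁)
    (x : ℕ → E) (d : ℕ → E)
    (hd : ∀ k, ∀ z : E,
      ⟪f' (x k), d k⟫ + 1 / (2 * α k) * ‖d k‖ ^ 2 + ψ (x k + d k) ≤
        ⟪f' (x k), z⟫ + 1 / (2 * α k) * ‖z‖ ^ 2 + ψ (x k + z))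
    (hdec : ∀ k, F (x k + d k) ≤ F (x k) - γ / (2 * α k) * ‖d k‖ ^ 2)
    (hx : ∀ k, x (k + 1) = x k + d k) :
    Filter.Tendsto (fun k : ℕ => (k : ℝ) * (F (x k) - F xstar))
        Filter.atTop (nhds 0) ∧
      Bornology.IsBounded (Set.range x) :=
  proximal_gradient_line_search_o_one_div_k_general f f' ψ L hL hfconv hderiv hlip hψconv F hF xstar
    hxstar γ C₁ C₂ hγ0 hC₂0 α hα x d hd hdec hx
end
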